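/- arXiv:1105.0794 — 5 statements merged into one kernel-verified Lean document; each statement's English description precedes it below -/
import Mathlib

section
/- (Compatibility lemma.) Let P₀, Q₀, P, Q ∈ K satisfy {P, Q₀} + {P₀, Q} = 0. Then ∂x( (∂ξ(Q₀)·P − ∂ξ(P₀)·Q)_{≤−1} ) = ∂ξ( (∂x(Q₀)·P − ∂x(P₀)·Q)_{≤−1} ); that is, the system ∂ξ(Φ) = (∂ξ(Q₀)·P − ∂ξ(P₀)·Q)_{≤−1}, ∂x(Φ) = (∂x(Q₀)·P − ∂x(P₀)·Q)_{≤−1} for an unknown Φ is compatible. -/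
/-! Symbols `f = Σ_{m ≤ M} a_m ξ^m` are modelled by Laurent series in `u = ξ⁻¹`,
i.e. `K = LaurentSeries R = HahnSeries ℤ R`; the coefficient of `ξ^m` sits at
exponent `-m` of `u`. -/

variable {R : Type*} [CommRing R] [Algebra ℚ R]

/-- The derivation `∂x`, applied coefficientwise. -/
noncomputable def dX (d : Derivation ℚ R R) (f : LaurentSeries R) : LaurentSeries R where
  coeff e := d (f.coeff e)
  isPWO_support' := f.isPWO_support.mono (fun e he => by
    simp only [Function.mem_support, HahnSeries.mem_support] at he ⊢
    intro h
    exact he (by rw [h, map_zero]))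

/-- The derivation `∂ξ = −u²·(d/du)`, so that `∂ξ(ξ^m) = m ξ^{m−1}`:
the term `a·u^{e-1} = a·ξ^{-(e-1)}` contributes `(1-e)·a·ξ^{-e} = (1-e)·a·u^e`. -/
noncomputable def dXi (f : LaurentSeries R) : LaurentSeries R where
  coeff e := (1 - e) • f.coeff (e - 1)
  isPWO_support' := by
    have hsub : Function.support (fun e : ℤ => (1 - e) • f.coeff (e - 1)) ⊆
        (fun a : ℤ => a + 1) '' f.support := by
      intro e he
      simp only [Function.mem_support] at he
      exact ⟨e - 1, fun h => he (by rw [h, smul_zero]), by ring⟩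
    have hmono : Monotone (fun a : ℤ => a + 1) := fun a b h => by simpa using h
    exact (f.isPWO_support.image_of_monotoneOn (hmono.monotoneOn _)).mono hsub

/-- Truncation `f ↦ (f)_{≤−1}`: keep exactly the terms with strictly negative
power of `ξ`, i.e. strictly positive exponent of `u`. -/
noncomputable def truncNeg (f : LaurentSeries R) : LaurentSeries R where
  coeff e := if 0 < e then f.coeff e else 0
  isPWO_support' := f.isPWO_support.mono (fun e he => by
    simp only [Function.mem_support, HahnSeries.mem_support] at he ⊢
    intro h
    apply he
    simp [h])


/-- The Poisson bracket `{a,b} = ∂ξ(a)·∂x(b) − ∂x(a)·∂ξ(b)`. -/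
noncomputable def poisson (d : Derivation ℚ R R) (a b : LaurentSeries R) : LaurentSeries R :=
  dXi a * dX d b - dX d a * dXi b

/-! Both `∂x` and `∂ξ` are derivations of `K`, they commute, and both commute with the
truncation `(·)_{≤−1}` (`∂ξ` kills `ξ⁰`, the only term its shift of exponents moves across the
cut). Hence the compatibility defect is the truncation of
`∂x(∂ξQ₀·P − ∂ξP₀·Q) − ∂ξ(∂xQ₀·P − ∂xP₀·Q)`; by the Leibniz rule the mixed second derivatives
cancel and what is left is `−({P,Q₀} + {P₀,Q})`. -/

namespace HahnSeries

theorem leibniz_of_coeff {Γ S : Type*} [AddCommMonoid Γ] [PartialOrder Γ]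
    [IsOrderedCancelAddMonoid Γ] [NonUnitalNonAssocSemiring S]
    (D : HahnSeries Γ S → HahnSeries Γ S) (φ : Γ → S →+ S)
    (hD : ∀ f e, (D f).coeff e = φ e (f.coeff e))
    (hφ : ∀ i j a b, φ (i + j) (a * b) = φ i a * b + a * φ j b) (f g : HahnSeries Γ S) :
    D (f * g) = D f * g + f * D g := by
  have hsupp : ∀ f, (D f).support ⊆ f.support := fun f e he h => by
    rw [mem_support, hD, h, map_zero] at he
    exact he rfl
  ext e
  rw [coeff_add, coeff_mul_left' f.isPWO_support (hsupp f),
    coeff_mul_right' g.isPWO_support (hsupp g), hD, coeff_mul, map_sum, ← Finset.sum_add_distrib]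
  refine Finset.sum_congr rfl fun ij hij => ?_
  rw [← (Finset.mem_antidiagonal.mp hij).2.2, hD, hD, hφ]

end HahnSeries

/-- The Euler operator `u·d/du`: unlike `d/du` it preserves supports, and `∂ξ = −u·(u·d/du)`. -/
noncomputable def eulerOp {S : Type*} [Ring S] (f : LaurentSeries S) : LaurentSeries S where
  coeff e := e • f.coeff e
  isPWO_support' := f.isPWO_support.mono fun e he h => he (by simp [h])

theorem eulerOp_mul {S : Type*} [Ring S] (f g : LaurentSeries S) :
    eulerOp (f * g) = eulerOp f * g + f * eulerOp g :=
  HahnSeries.leibniz_of_coeff eulerOp (DistribSMul.toAddMonoidHom S) (fun _ _ => rfl)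
    (fun i j a b => by
      simp only [DistribSMul.toAddMonoidHom_apply, add_smul, smul_mul_assoc, mul_smul_comm])
    f g

omit [Algebra ℚ R] in
theorem dXi_eq_neg_single_mul_eulerOp (f : LaurentSeries R) :
    dXi f = -(HahnSeries.single 1 1 * eulerOp f) := by
  ext e
  obtain ⟨e, rfl⟩ : ∃ e', e = e' + 1 := ⟨e - 1, by ring⟩
  rw [HahnSeries.coeff_neg, HahnSeries.coeff_single_mul_add, one_mul]
  change (1 - (e + 1)) • f.coeff (e + 1 - 1) = -(e • f.coeff e)
  rw [add_sub_cancel_right, ← neg_smul]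
  congr 1
  ring

omit [Algebra ℚ R] in
theorem dXi_mul (f g : LaurentSeries R) : dXi (f * g) = dXi f * g + f * dXi g := by
  simp only [dXi_eq_neg_single_mul_eulerOp, eulerOp_mul]
  ring

omit [Algebra ℚ R] in
theorem dXi_sub (f g : LaurentSeries R) : dXi (f - g) = dXi f - dXi g := by
  ext e
  exact smul_sub _ _ _

omit [Algebra ℚ R] in
theorem dXi_truncNeg (f : LaurentSeries R) : dXi (truncNeg f) = truncNeg (dXi f) := by
  ext e
  change (1 - e) • (if 0 < e - 1 then f.coeff (e - 1) else 0)
    = if 0 < e then (1 - e) • f.coeff (e - 1) else 0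
  rcases lt_trichotomy e 1 with he | rfl | he
  · rw [if_neg (by omega), if_neg (by omega), smul_zero]
  · simp
  · rw [if_pos (by omega), if_pos (by omega)]

theorem dX_mul (d : Derivation ℚ R R) (f g : LaurentSeries R) :
    dX d (f * g) = dX d f * g + f * dX d g :=
  HahnSeries.leibniz_of_coeff (dX d) (fun _ => d.toAddMonoidHom) (fun _ _ => rfl)
    (fun _ _ a b => by simp [Derivation.leibniz, add_comm, mul_comm]) f g

theorem dX_sub (d : Derivation ℚ R R) (f g : LaurentSeries R) :
    dX d (f - g) = dX d f - dX d g := by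
  ext e
  exact map_sub d _ _

theorem dX_dXi_comm (d : Derivation ℚ R R) (f : LaurentSeries R) :
    dX d (dXi f) = dXi (dX d f) := by
  ext e
  exact map_zsmul d _ _

theorem dX_truncNeg (d : Derivation ℚ R R) (f : LaurentSeries R) :
    dX d (truncNeg f) = truncNeg (dX d f) := by
  ext e
  change d (if 0 < e then f.coeff e else 0) = if 0 < e then d (f.coeff e) else 0
  split_ifs <;> simp

theorem dX_sub_dXi_eq_neg_poisson (d : Derivation ℚ R R) (P₀ Q₀ P Q : LaurentSeries R) :
    dX d (dXi Q₀ * P - dXi P₀ * Q) - dXi (dX d Q₀ * P - dX d P₀ * Q)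
      = -(poisson d P Q₀ + poisson d P₀ Q) := by
  simp only [dX_sub, dXi_sub, dX_mul, dXi_mul, dX_dXi_comm, poisson]
  ring

/-- compatibility lemma: if `{P, Q₀} + {P₀, Q} = 0` then
`∂x((∂ξ(Q₀)·P − ∂ξ(P₀)·Q)_{≤−1}) = ∂ξ((∂x(Q₀)·P − ∂x(P₀)·Q)_{≤−1})`,
i.e. the system `∂ξΦ = (∂ξ(Q₀)·P − ∂ξ(P₀)·Q)_{≤−1}`, `∂xΦ = (∂x(Q₀)·P − ∂x(P₀)·Q)_{≤−1}`
for an unknown `Φ` is compatible. -/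
theorem compatibility_lemma (d : Derivation ℚ R R) (P₀ Q₀ P Q : LaurentSeries R)
    (h : poisson d P Q₀ + poisson d P₀ Q = 0) :
    dX d (truncNeg (dXi Q₀ * P - dXi P₀ * Q))
      = dXi (truncNeg (dX d Q₀ * P - dX d P₀ * Q)) := by
  have hmixed := dX_sub_dXi_eq_neg_poisson d P₀ Q₀ P Q
  rw [h, neg_zero, sub_eq_zero] at hmixed
  rw [dX_truncNeg, dXi_truncNeg, hmixed]
end

section
/- (Integration step for the dressing recursion.) Take R := ℚ[[x]] (Mathlib's PowerSeries ℚ) with ∂x the formal derivative, and K as above. Let A, B ∈ K be supported in strictly negative powers of ξ (i.e. (A)_{≤−1} = A and (B)_{≤−1} = B) and satisfy the closedness condition ∂x(A) = ∂ξ(B). Then there exist a unique constant α ∈ ℚ and a unique X̃ ∈ K supported in strictly negative powers of ξ such that ∂ξ(X̃) + α·ξ⁻¹ = A and ∂x(X̃) = B. (Equivalently: Φ := α·log ξ + X̃ solves ∂ξΦ = A, ∂xΦ = B.) -/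
/-! Symbols `f = Σ_{m ≤ M} a_m ξ^m` are modelled by Laurent series in `u = ξ⁻¹`,
i.e. `K = LaurentSeries R = HahnSeries ℤ R`; the coefficient of `ξ^m` sits at
exponent `-m` of `u`. -/

variable {R : Type*} [CommRing R] [Algebra ℚ R]

/-! The constant is forced: closedness in degree `ξ⁻¹` says `∂x` kills the `ξ⁻¹`-coefficient of
`A`, so over `ℚ[[x]]` that coefficient is a rational constant `α`. The remaining coefficients of
`∂ξ X̃ = A - α ξ⁻¹` read `-m X̃_m = A_{m+1}` for `m > 0` (indices are exponents of `u = ξ⁻¹`), which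
determines `X̃` uniquely, and dividing the closedness relation `∂x A_{m+1} = -m B_m` by `-m`
gives `∂x X̃ = B`. -/

theorem PowerSeries.eq_C_constantCoeff_of_derivative_eq_zero {S : Type*} [CommRing S]
    [IsAddTorsionFree S] {f : PowerSeries S} (h : PowerSeries.derivative S f = 0) :
    f = PowerSeries.C (PowerSeries.constantCoeff f) :=
  PowerSeries.derivative.ext (by rw [h, PowerSeries.derivative_C]) (by simp)

theorem zsmul_eq_iff_eq_inv_smul {M : Type*} [AddCommGroup M] [Module ℚ M] {n : ℤ} (hn : n ≠ 0)
    {x y : M} : n • y = x ↔ y = (n : ℚ)⁻¹ • x := by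
  rw [← Int.cast_smul_eq_zsmul ℚ, eq_inv_smul_iff₀ (Int.cast_ne_zero.mpr hn)]

section

variable {S : Type*} [CommRing S]

@[simp]
theorem coeff_dXi (f : LaurentSeries S) (e : ℤ) :
    (dXi f).coeff e = (1 - e) • f.coeff (e - 1) :=
  rfl

theorem coeff_add_one_dXi (f : LaurentSeries S) (e : ℤ) :
    (dXi f).coeff (e + 1) = (-e) • f.coeff e := by
  rw [coeff_dXi, add_sub_cancel_right, sub_add_cancel_right]

@[simp]
theorem coeff_truncNeg (f : LaurentSeries S) (e : ℤ) :
    (truncNeg f).coeff e = if 0 < e then f.coeff e else 0 :=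
  rfl

theorem truncNeg_eq_self_iff {f : LaurentSeries S} :
    truncNeg f = f ↔ ∀ e ≤ 0, f.coeff e = 0 := by
  refine ⟨fun hf e he => ?_, fun hf => HahnSeries.ext <| funext fun e => ?_⟩
  · rw [← hf, coeff_truncNeg, if_neg (not_lt.mpr he)]
  · rw [coeff_truncNeg]
    split_ifs with he
    · rfl
    · exact (hf e (not_lt.mp he)).symm

variable [Algebra ℚ S]

@[simp]
theorem coeff_dX (d : Derivation ℚ S S) (f : LaurentSeries S) (e : ℤ) :
    (dX d f).coeff e = d (f.coeff e) :=
  rfl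

/-- The `ξ`-antiderivative without constant term of `A` minus its `ξ⁻¹` term, whose
antiderivative would be a logarithm. -/
noncomputable def primitiveXi (A : LaurentSeries S) : LaurentSeries S :=
  HahnSeries.ofSuppBddBelow (fun e => if 0 < e then (-(e : ℚ))⁻¹ • A.coeff (e + 1) else 0)
    ⟨0, fun e he => by
      by_contra h
      exact he (if_neg (by omega))⟩

@[simp]
theorem coeff_primitiveXi (A : LaurentSeries S) (e : ℤ) :
    (primitiveXi A).coeff e = if 0 < e then (-(e : ℚ))⁻¹ • A.coeff (e + 1) else 0 :=
  rfl

theorem truncNeg_primitiveXi (A : LaurentSeries S) : truncNeg (primitiveXi A) = primitiveXi A :=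
  truncNeg_eq_self_iff.mpr fun e he => by simp [not_lt.mpr he]

theorem dXi_primitiveXi_add_single {A : LaurentSeries S} (hA : truncNeg A = A) :
    dXi (primitiveXi A) + HahnSeries.single 1 (A.coeff 1) = A := by
  ext e
  obtain ⟨k, rfl⟩ : ∃ k, e = k + 1 := ⟨e - 1, by ring⟩
  rw [HahnSeries.coeff_add, coeff_add_one_dXi, coeff_primitiveXi, HahnSeries.coeff_single]
  rcases lt_trichotomy k 0 with hk | rfl | hk
  · rw [if_neg (by omega), if_neg (by omega), smul_zero, add_zero,
      truncNeg_eq_self_iff.mp hA _ (by omega)]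
  · simp
  · rw [if_pos hk, if_neg (by omega), add_zero,
      (zsmul_eq_iff_eq_inv_smul (neg_ne_zero.mpr hk.ne')).mpr (by push_cast; rfl)]

theorem eq_primitiveXi_of_dXi_add_single_eq {A Y : LaurentSeries S} {c : S}
    (hY : truncNeg Y = Y) (h : dXi Y + HahnSeries.single 1 c = A) :
    c = A.coeff 1 ∧ Y = primitiveXi A := by
  have hcoeff (e : ℤ) : (dXi Y).coeff e + (HahnSeries.single 1 c).coeff e = A.coeff e := by
    rw [← h, HahnSeries.coeff_add]
  refine ⟨by simpa using hcoeff 1, HahnSeries.ext <| funext fun e => ?_⟩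
  rw [coeff_primitiveXi]
  split_ifs with he
  · have hsucc := hcoeff (e + 1)
    rw [coeff_add_one_dXi, HahnSeries.coeff_single_of_ne (by omega), add_zero,
      zsmul_eq_iff_eq_inv_smul (neg_ne_zero.mpr he.ne')] at hsucc
    rw [hsucc, Int.cast_neg]
  · exact truncNeg_eq_self_iff.mp hY e (not_lt.mp he)

theorem derivation_coeff_one_eq_zero {d : Derivation ℚ S S} {A B : LaurentSeries S}
    (hclosed : dX d A = dXi B) : d (A.coeff 1) = 0 := by
  simpa using congrArg (HahnSeries.coeff · 1) hclosed

theorem dX_primitiveXi {d : Derivation ℚ S S} {A B : LaurentSeries S} (hB : truncNeg B = B)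
    (hclosed : dX d A = dXi B) : dX d (primitiveXi A) = B := by
  ext e
  rw [coeff_dX, coeff_primitiveXi]
  split_ifs with he
  · have hsucc : d (A.coeff (e + 1)) = (-e) • B.coeff e := by
      rw [← coeff_add_one_dXi, ← hclosed, coeff_dX]
    rw [Derivation.map_smul, hsucc, ← Int.cast_neg]
    exact ((zsmul_eq_iff_eq_inv_smul (neg_ne_zero.mpr he.ne')).mp rfl).symm
  · rw [map_zero, truncNeg_eq_self_iff.mp hB e (not_lt.mp he)]

end

/-- integration step for the dressing recursion: over `R = ℚ[[x]]`
with `∂x` the formal derivative, if `A, B` are supported in strictly negative powers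
of `ξ` and satisfy the closedness condition `∂x(A) = ∂ξ(B)`, then there exist a unique
constant `α ∈ ℚ` and a unique `X̃` supported in strictly negative powers of `ξ` with
`∂ξ(X̃) + α·ξ⁻¹ = A` and `∂x(X̃) = B` (here `α·ξ⁻¹` is the series whose only term is
the image of `α` in `R` times `u`). -/
theorem integration_step (A B : LaurentSeries (PowerSeries ℚ))
    (hA : truncNeg A = A) (hB : truncNeg B = B)
    (hclosed : dX (PowerSeries.derivative ℚ) A = dXi B) :
    ∃! p : ℚ × LaurentSeries (PowerSeries ℚ),
      truncNeg p.2 = p.2 ∧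
      dXi p.2 + HahnSeries.single (1 : ℤ) (algebraMap ℚ (PowerSeries ℚ) p.1) = A ∧
      dX (PowerSeries.derivative ℚ) p.2 = B := by
  obtain ⟨α, hα⟩ : ∃ α : ℚ, algebraMap ℚ (PowerSeries ℚ) α = A.coeff 1 :=
    ⟨_, (PowerSeries.eq_C_constantCoeff_of_derivative_eq_zero
      (derivation_coeff_one_eq_zero hclosed)).symm⟩
  refine ⟨(α, primitiveXi A), ⟨truncNeg_primitiveXi A, ?_, dX_primitiveXi hB hclosed⟩, ?_⟩
  · rw [hα]
    exact dXi_primitiveXi_add_single hA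
  · rintro ⟨β, Y⟩ ⟨hY, hdXi, -⟩
    obtain ⟨hβ, rfl⟩ := eq_primitiveXi_of_dXi_add_single_eq hY hdXi
    rw [← hα] at hβ
    exact Prod.ext ((algebraMap ℚ (PowerSeries ℚ)).injective hβ) rfl
end

section
/- (Order estimate for the amplitude recursion of Aoki's exponential calculus.) Let h ∈ A, let w : ℕ → A satisfy w_k ∈ I^k for all k ≥ 1 (with w₀ ∈ A arbitrary), let ψ₀ ∈ A, and define ψ : ℕ → A recursively by ψ_{k+1} := (1/(k+1))·( h·δ(π(ψ_k)) + Σ_{ν=0}^{k} ( δ(ψ_ν)·π(w_{k−ν}) + π(ψ_ν)·δ(w_{k−ν}) ) ). Then ψ_k ∈ I^k for every k ≥ 1. (In the paper: ord_ξ ψ_k ≤ N + M − k, so that ψ(1) = Σ_k ψ_k makes sense as a formal symbol.) -/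
/-! Since `I ^ 0 = ⊤`, the hypotheses extend to all orders: `δ` raises the `I`-adic order by one
and `π` preserves it on every `I ^ m`, and `w k ∈ I ^ k` for all `k`. By strong induction
`ψ ν ∈ I ^ ν`; then each product in the recursion for `ψ (k + 1)` has orders adding up to
`k + 1`, and so does `h * δ (π (ψ k))`. -/

namespace Ideal

variable {A : Type*} [CommSemiring A] {I : Ideal A}

theorem mem_pow_of_forall_one_le {x : ℕ → A} (hx : ∀ k, 1 ≤ k → x k ∈ I ^ k) (k : ℕ) :
    x k ∈ I ^ k := by
  rcases k with _ | k
  · simp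
  · exact hx _ k.succ_pos

theorem mul_mem_pow_of_add_eq {x y : A} {a b n : ℕ} (hx : x ∈ I ^ a) (hy : y ∈ I ^ b)
    (hn : a + b = n) : x * y ∈ I ^ n :=
  hn ▸ pow_add I a b ▸ mul_mem_mul hx hy

theorem map_mem_pow_succ {δ : A → A} (hδA : ∀ a, δ a ∈ I)
    (hδpow : ∀ m, 1 ≤ m → ∀ a ∈ I ^ m, δ a ∈ I ^ (m + 1)) (m : ℕ) {a : A} (ha : a ∈ I ^ m) :
    δ a ∈ I ^ (m + 1) := by
  rcases m with _ | m
  · simpa using hδA a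
  · exact hδpow _ m.succ_pos a ha

theorem map_mem_pow {π : A → A} (hπpow : ∀ m, 1 ≤ m → ∀ a ∈ I ^ m, π a ∈ I ^ m) (m : ℕ)
    {a : A} (ha : a ∈ I ^ m) : π a ∈ I ^ m := by
  rcases m with _ | m
  · simp
  · exact hπpow _ m.succ_pos a ha

section Recursion

variable {δ π : A → A} (hδ : ∀ m, ∀ a ∈ I ^ m, δ a ∈ I ^ (m + 1))
  (hπ : ∀ m, ∀ a ∈ I ^ m, π a ∈ I ^ m) {w ψ : ℕ → A} (hw : ∀ k, w k ∈ I ^ k)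
include hδ hπ hw

theorem sum_range_succ_mem_pow_succ {k : ℕ} (hψ : ∀ ν ≤ k, ψ ν ∈ I ^ ν) :
    ∑ ν ∈ Finset.range (k + 1), (δ (ψ ν) * π (w (k - ν)) + π (ψ ν) * δ (w (k - ν))) ∈
      I ^ (k + 1) := by
  refine Submodule.sum_mem _ fun ν hν => ?_
  have hνk : ν ≤ k := Nat.lt_succ_iff.mp (Finset.mem_range.mp hν)
  exact add_mem
    (mul_mem_pow_of_add_eq (hδ _ _ (hψ ν hνk)) (hπ _ _ (hw _)) (by omega))
    (mul_mem_pow_of_add_eq (hπ _ _ (hψ ν hνk)) (hδ _ _ (hw _)) (by omega))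

theorem recursion_step_mem_pow_succ (h : A) {k : ℕ} (hψ : ∀ ν ≤ k, ψ ν ∈ I ^ ν) :
    h * δ (π (ψ k)) + ∑ ν ∈ Finset.range (k + 1),
      (δ (ψ ν) * π (w (k - ν)) + π (ψ ν) * δ (w (k - ν))) ∈ I ^ (k + 1) :=
  add_mem (mul_mem_left _ h (hδ _ _ (hπ _ _ (hψ k le_rfl))))
    (sum_range_succ_mem_pow_succ hδ hπ hw hψ)

end Recursion

end Ideal

theorem aoki_psi_recursion_order_general {A : Type*} [CommRing A] [Algebra ℚ A] (I : Ideal A)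
    (δ π : A → A)
    (hδA : ∀ a : A, δ a ∈ I)
    (hδpow : ∀ m : ℕ, 1 ≤ m → ∀ a ∈ I ^ m, δ a ∈ I ^ (m + 1))
    (hπpow : ∀ m : ℕ, 1 ≤ m → ∀ a ∈ I ^ m, π a ∈ I ^ m)
    (h : A) (w ψ : ℕ → A)
    (hwk : ∀ k : ℕ, 1 ≤ k → w k ∈ I ^ k)
    (hψ : ∀ k : ℕ, ψ (k + 1) = ((k + 1 : ℚ))⁻¹ •
      (h * δ (π (ψ k)) + ∑ ν ∈ Finset.range (k + 1),
        (δ (ψ ν) * π (w (k - ν)) + π (ψ ν) * δ (w (k - ν))))) :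
    ∀ k : ℕ, 1 ≤ k → ψ k ∈ I ^ k := by
  have hδ := Ideal.map_mem_pow_succ hδA hδpow
  have hπ := Ideal.map_mem_pow hπpow
  have hw := Ideal.mem_pow_of_forall_one_le hwk
  suffices ∀ k, ψ k ∈ I ^ k from fun k _ => this k
  intro k
  induction k using Nat.strong_induction_on with
  | _ k IH =>
    rcases k with _ | k
    · simp
    · rw [hψ k]
      exact Submodule.smul_of_tower_mem _ _
        (Ideal.recursion_step_mem_pow_succ hδ hπ hw h fun ν hν => IH ν (Nat.lt_succ_of_le hν))

/-- order estimate for the amplitude recursion of Aoki's exponential calculus: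
given `h ∈ A`, a family `w` with `w_k ∈ I^k` for `k ≥ 1`, and the recursion
`ψ_{k+1} = (1/(k+1))·(h·δ(π(ψ_k)) + Σ_{ν=0}^{k} (δ(ψ_ν)·π(w_{k−ν}) + π(ψ_ν)·δ(w_{k−ν})))`,
one has `ψ_k ∈ I^k` for all `k ≥ 1`.
`A` is a commutative ℚ-algebra, `I ⊆ A` an ideal, and `δ, π : A → A` two derivations
with `δ(A) ⊆ I`, `δ(I^m) ⊆ I^{m+1}` and `π(I^m) ⊆ I^m` for all `m ≥ 1`. -/
theorem aoki_psi_recursion_order {A : Type*} [CommRing A] [Algebra ℚ A] (I : Ideal A)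
    (δ π : A → A)
    (hδadd : ∀ a b : A, δ (a + b) = δ a + δ b)
    (hδmul : ∀ a b : A, δ (a * b) = δ a * b + a * δ b)
    (hπadd : ∀ a b : A, π (a + b) = π a + π b)
    (hπmul : ∀ a b : A, π (a * b) = π a * b + a * π b)
    (hδA : ∀ a : A, δ a ∈ I)
    (hδpow : ∀ m : ℕ, 1 ≤ m → ∀ a ∈ I ^ m, δ a ∈ I ^ (m + 1))
    (hπpow : ∀ m : ℕ, 1 ≤ m → ∀ a ∈ I ^ m, π a ∈ I ^ m)
    (h : A) (w ψ : ℕ → A)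
    (hwk : ∀ k : ℕ, 1 ≤ k → w k ∈ I ^ k)
    (hψ : ∀ k : ℕ, ψ (k + 1) = ((k + 1 : ℚ))⁻¹ •
      (h * δ (π (ψ k)) + ∑ ν ∈ Finset.range (k + 1),
        (δ (ψ ν) * π (w (k - ν)) + π (ψ ν) * δ (w (k - ν))))) :
    ∀ k : ℕ, 1 ≤ k → ψ k ∈ I ^ k :=
  aoki_psi_recursion_order_general I δ π hδA hδpow hπpow h w ψ hwk hψ
end

section
/- (Leading ℏ-order of the Campbell–Hausdorff series.) Let L be a Lie algebra over ℚ with a decreasing filtration F : ℤ → Submodule ℚ L satisfying F_{j+1} ⊆ F_j and ⁅F_a, F_b⁆ ⊆ F_{a+b+1} for all a, b ∈ ℤ. Fix i ≥ 1, A ∈ F_{−1} and B ∈ F_{i−1}, and set X := A + B, Y := −A. Define c : {n ≥ 1} → L by the Campbell–Hausdorff recursion c_1 := X + Y and c_{n+1} := (1/(n+1))·( (1/2)·⁅X − Y, c_n⁆ + Σ_{p ≥ 1, 2p ≤ n} (B_{2p}/(2p)!) · Σ_{k_1 + ⋯ + k_{2p} = n, k_j ≥ 1} ⁅c_{k_1},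 ⁅⋯, ⁅c_{k_{2p}}, X + Y⁆ ⋯⁆⁆ ), where B_{2p} are the Bernoulli numbers. Then for every n ≥ 1, c_n − (1/n!)·(ad A)^{n−1}(B) ∈ F_i. -/
/-!
Write `D n := (1/n!) (ad A)^(n-1) B`. Since `X - Y = 2A + B` and `X + Y = B`, the recursion gives
`c (n+1) - D (n+1) = (1/(n+1)) (⁅A, c n - D n⁆ + ½ ⁅B, c n⁆ + S)`, where `S` is the Bernoulli part.
By induction `c m - D m ∈ F i`, hence `c m ∈ F (i-1) ⊆ F 0`. Bracketing with `A ∈ F (-1)` does not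
lower the filtration degree, `⁅B, c n⁆ ∈ F (2i-1)`, and every term of `S` brackets `2p ≥ 2` elements
of `F 0` onto `B`, landing in `F (i+1)`; so `c (n+1) - D (n+1) ∈ F i`.
-/

open Finset

section Filtration

variable {R L : Type*} [CommRing R] [LieRing L] [LieAlgebra R L] {F : ℤ → Submodule R L}

theorem lie_mem_of_le_add (hF : Antitone F)
    (hbr : ∀ a b : ℤ, ∀ x ∈ F a, ∀ y ∈ F b, ⁅x, y⁆ ∈ F (a + b + 1))
    {a b j : ℤ} {x y : L} (hx : x ∈ F a) (hy : y ∈ F b) (hj : j ≤ a + b + 1) :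
    ⁅x, y⁆ ∈ F j :=
  hF hj (hbr a b x hx y hy)

theorem ad_pow_apply_mem (hF : Antitone F)
    (hbr : ∀ a b : ℤ, ∀ x ∈ F a, ∀ y ∈ F b, ⁅x, y⁆ ∈ F (a + b + 1))
    {j : ℤ} {A B : L} (hA : A ∈ F (-1)) (hB : B ∈ F j) (m : ℕ) :
    ((LieAlgebra.ad R L A) ^ m) B ∈ F j := by
  induction m with
  | zero => simpa using hB
  | succ m ih =>
    rw [pow_succ', Module.End.mul_apply, LieAlgebra.ad_apply]
    exact lie_mem_of_le_add hF hbr hA ih (by omega)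

theorem foldr_lie_mem (hbr : ∀ a b : ℤ, ∀ x ∈ F a, ∀ y ∈ F b, ⁅x, y⁆ ∈ F (a + b + 1))
    {j : ℤ} {z : L} (hz : z ∈ F j) (l : List L) (hl : ∀ x ∈ l, x ∈ F 0) :
    l.foldr (fun x y => ⁅x, y⁆) z ∈ F (j + l.length) := by
  induction l with
  | nil => simpa using hz
  | cons x l ih =>
    have h := hbr 0 _ x (hl x List.mem_cons_self) _ (ih fun y hy => hl y (List.mem_cons_of_mem _ hy))
    simpa only [List.length_cons, List.foldr_cons, Nat.cast_succ, zero_add, add_assoc] using h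

end Filtration

section CampbellHausdorff

variable {L : Type*} [LieRing L] [LieAlgebra ℚ L]

/-- The Bernoulli part of the Campbell–Hausdorff recursion for `c (n + 1)`, with `z = X + Y`. -/
noncomputable def bernoulliBracketSum (c : ℕ → L) (z : L) (n : ℕ) : L :=
  ∑ p ∈ Icc 1 (n / 2), (bernoulli (2 * p) / (Nat.factorial (2 * p) : ℚ)) •
    ∑ k ∈ (Nat.antidiagonalTuple (2 * p) n).filter (fun k => ∀ j, 1 ≤ k j),
      (List.ofFn (fun j => c (k j))).foldr (fun x y => ⁅x, y⁆) z

theorem bernoulliBracketSum_mem {F : ℤ → Submodule ℚ L} (hF : Antitone F)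
    (hbr : ∀ a b : ℤ, ∀ x ∈ F a, ∀ y ∈ F b, ⁅x, y⁆ ∈ F (a + b + 1))
    {c : ℕ → L} {z : L} {j : ℤ} {n : ℕ} (hc : ∀ m, 1 ≤ m → m ≤ n → c m ∈ F 0) (hz : z ∈ F j) :
    bernoulliBracketSum c z n ∈ F (j + 2) := by
  refine Submodule.sum_mem _ fun p hp => Submodule.smul_mem _ _ <|
    Submodule.sum_mem _ fun k hk => ?_
  obtain ⟨hsum, hpos⟩ := mem_filter.mp hk
  rw [Nat.mem_antidiagonalTuple] at hsum
  have hmem : ∀ x ∈ List.ofFn (fun j => c (k j)), x ∈ F 0 := by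
    rintro x hx
    obtain ⟨t, rfl⟩ := List.mem_ofFn.mp hx
    exact hc _ (hpos t) (hsum ▸ single_le_sum (fun _ _ => Nat.zero_le _) (mem_univ t))
  have h := foldr_lie_mem hbr hz _ hmem
  rw [List.length_ofFn] at h
  exact hF (by have := (mem_Icc.mp hp).1; omega) h

theorem campbellHausdorff_step_sub_leading (A B x S : L) {n : ℕ} (hn : 1 ≤ n) :
    ((n + 1 : ℚ))⁻¹ • ((2 : ℚ)⁻¹ • ⁅(A + B) - (-A), x⁆ + S)
        - ((Nat.factorial (n + 1) : ℚ))⁻¹ • ((LieAlgebra.ad ℚ L A) ^ n) B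
      = ((n + 1 : ℚ))⁻¹ • (⁅A, x - ((Nat.factorial n : ℚ))⁻¹ • ((LieAlgebra.ad ℚ L A) ^ (n - 1)) B⁆
          + (2 : ℚ)⁻¹ • ⁅B, x⁆ + S) := by
  obtain ⟨m, rfl⟩ : ∃ m, n = m + 1 := ⟨n - 1, by omega⟩
  rw [Nat.add_sub_cancel, pow_succ', Module.End.mul_apply, LieAlgebra.ad_apply,
    Nat.factorial_succ, Nat.cast_mul, mul_inv, mul_smul, lie_sub, lie_smul]
  simp only [sub_neg_eq_add, add_lie, Nat.cast_add, Nat.cast_one]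
  module

end CampbellHausdorff

/-- leading ℏ-order of the Campbell–Hausdorff series: let `L` be a
Lie algebra over ℚ with a decreasing filtration `F` satisfying `⁅F_a, F_b⁆ ⊆ F_{a+b+1}`.
For `i ≥ 1`, `A ∈ F_{−1}`, `B ∈ F_{i−1}`, `X := A + B`, `Y := −A`, and `c` defined by the
Campbell–Hausdorff recursion, one has `c_n − (1/n!)·(ad A)^{n−1}(B) ∈ F_i` for all `n ≥ 1`. -/
theorem campbell_hausdorff_leading_order {L : Type*} [LieRing L] [LieAlgebra ℚ L]
    (F : ℤ → Submodule ℚ L)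
    (hdec : ∀ j : ℤ, F (j + 1) ≤ F j)
    (hbr : ∀ a b : ℤ, ∀ x ∈ F a, ∀ y ∈ F b, ⁅x, y⁆ ∈ F (a + b + 1))
    (i : ℤ) (hi : 1 ≤ i)
    (A B : L) (hA : A ∈ F (-1)) (hB : B ∈ F (i - 1))
    (c : ℕ → L)
    (hc1 : c 1 = (A + B) + (-A))
    (hcrec : ∀ n : ℕ, 1 ≤ n → c (n + 1) = ((n + 1 : ℚ))⁻¹ •
      ((2 : ℚ)⁻¹ • ⁅(A + B) - (-A), c n⁆ +
        ∑ p ∈ Finset.Icc 1 (n / 2), (bernoulli (2 * p) / (Nat.factorial (2 * p) : ℚ)) •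
          ∑ k ∈ (Finset.Nat.antidiagonalTuple (2 * p) n).filter (fun k => ∀ j, 1 ≤ k j),
            (List.ofFn (fun j => c (k j))).foldr (fun x y => ⁅x, y⁆) ((A + B) + (-A)))) :
    ∀ n : ℕ, 1 ≤ n →
      c n - ((Nat.factorial n : ℚ))⁻¹ • ((LieAlgebra.ad ℚ L A) ^ (n - 1)) B ∈ F i := by
  have hF : Antitone F := antitone_int_of_succ_le hdec
  have hXY : (A + B) + (-A) = B := by abel
  intro n hn
  induction n using Nat.strong_induction_on with
  | _ n ih =>
  obtain rfl | ⟨n, hn1, rfl⟩ : n = 1 ∨ ∃ m, 1 ≤ m ∧ n = m + 1 := by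
    rcases hn.eq_or_lt with h | h
    · exact .inl h.symm
    · exact .inr ⟨n - 1, by omega, by omega⟩
  · simp [hc1, hXY]
  have hc : ∀ m, 1 ≤ m → m ≤ n → c m ∈ F (i - 1) := fun m h1 hm => by
    simpa only [sub_add_cancel] using add_mem (hF (by omega) (ih m (by omega) h1))
      (Submodule.smul_mem _ (m.factorial : ℚ)⁻¹ (ad_pow_apply_mem hF hbr hA hB (m - 1)))
  rw [hcrec n hn1, Nat.add_sub_cancel, hXY, ← bernoulliBracketSum.eq_1,
    campbellHausdorff_step_sub_leading A B (c n) (bernoulliBracketSum c B n) hn1]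
  refine Submodule.smul_mem _ _ (add_mem (add_mem ?_ ?_) ?_)
  · exact lie_mem_of_le_add hF hbr hA (ih n (by omega) hn1) (by omega)
  · exact Submodule.smul_mem _ _ (lie_mem_of_le_add hF hbr hB (hc n hn1 le_rfl) (by omega))
  · exact hF (by omega) (bernoulliBracketSum_mem hF hbr
      (fun m h1 hm => hF (by omega) (hc m h1 hm)) hB)
end

section
/- (Order estimates for the phase recursion.) With the families Y^{(l)}_{k,n} and S^{(l)}_n defined by the recursion below, one has Y^{(l)}_{k,n} ∈ I^{k+l+1} for all l, k, n, and consequently S^{(l+1)}_n ∈ I^{l+1} for all l, n. (In the paper: ord_ξ Y^{(l)}_{k,n} ≤ −k−l−1 and ord_ξ S^{(l+1)}_n ≤ −l−1, so that S_n := Σ_l S^{(l)}_n makes sense as a formal power series in ξ⁻¹ with no nonnegative powers; this proves the regularity in ℏ of the WKB phase.) -/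
/-! Induction on `l`, and for fixed `l` on `k`. The `k`-step raises the order by one because
`π` preserves `I ^ m` and `δ` raises it by one; in the sum, `δ (Y l' k n') ∈ I ^ (k + l' + 2)` and
`π (S (l - l') _) ∈ I ^ (l - l')` multiply into `I ^ (k + l + 2)`, the bound on the phase
coming from the terms `Y l'` with `l' < l` already treated. -/

open Finset

section PhaseRecursion

variable {A : Type*} [CommRing A] [Algebra ℚ A] {I : Ideal A}

theorem phase_mem_pow_of_terms_mem_pow {S : ℕ → ℕ → A} {Y : ℕ → ℕ → ℕ → A}
    (hSrec : ∀ l n, S (l + 1) n = ((l + 1 : ℚ))⁻¹ • ∑ k ∈ range (l + n + 1), Y l k n)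
    {l n : ℕ} (hY : ∀ k, Y l k n ∈ I ^ (k + l + 1)) : S (l + 1) n ∈ I ^ (l + 1) := by
  rw [hSrec]
  refine Submodule.smul_of_tower_mem _ _ (Ideal.sum_mem _ fun k _ => ?_)
  exact Ideal.pow_le_pow_right (by omega) (hY k)

theorem term_succ_mem_pow {δ π : A → A}
    (hδpow : ∀ m : ℕ, 1 ≤ m → ∀ a ∈ I ^ m, δ a ∈ I ^ (m + 1))
    (hπpow : ∀ m : ℕ, 1 ≤ m → ∀ a ∈ I ^ m, π a ∈ I ^ m)
    {S : ℕ → ℕ → A} {Y : ℕ → ℕ → ℕ → A}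
    (hYrec : ∀ l k n, Y l (k + 1) n = ((k + 1 : ℚ))⁻¹ •
      ((if n = 0 then 0 else δ (π (Y l k (n - 1)))) +
        ∑ l' ∈ range l, ∑ n' ∈ range (n + 1), δ (Y l' k n') * π (S (l - l') (n - n'))))
    {l k : ℕ} (hYk : ∀ n, Y l k n ∈ I ^ (k + l + 1))
    (hYlt : ∀ l' < l, ∀ k n, Y l' k n ∈ I ^ (k + l' + 1))
    (hSle : ∀ m n, 1 ≤ m → m ≤ l → S m n ∈ I ^ m) (n : ℕ) :
    Y l (k + 1) n ∈ I ^ (k + 1 + l + 1) := by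
  rw [hYrec]
  refine Submodule.smul_of_tower_mem _ _ (add_mem ?_ (Ideal.sum_mem _ fun l' hl' =>
    Ideal.sum_mem _ fun n' _ => ?_))
  · split_ifs
    · exact zero_mem _
    · rw [show k + 1 + l + 1 = k + l + 1 + 1 by omega]
      exact hδpow _ (by omega) _ (hπpow _ (by omega) _ (hYk (n - 1)))
  · have hl' : l' < l := mem_range.mp hl'
    have hδY : δ (Y l' k n') ∈ I ^ (k + l' + 1 + 1) := hδpow _ (by omega) _ (hYlt l' hl' k n')
    have hπS : π (S (l - l') (n - n')) ∈ I ^ (l - l') :=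
      hπpow _ (by omega) _ (hSle _ _ (by omega) (Nat.sub_le l l'))
    rw [show k + 1 + l + 1 = (k + l' + 1 + 1) + (l - l') by omega, pow_add]
    exact Ideal.mul_mem_mul hδY hπS

theorem terms_mem_pow {δ π : A → A}
    (hδpow : ∀ m : ℕ, 1 ≤ m → ∀ a ∈ I ^ m, δ a ∈ I ^ (m + 1))
    (hπpow : ∀ m : ℕ, 1 ≤ m → ∀ a ∈ I ^ m, π a ∈ I ^ m)
    {X : ℕ → A} (hX : ∀ n, X n ∈ I) {S : ℕ → ℕ → A} {Y : ℕ → ℕ → ℕ → A}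
    (hY0 : ∀ l n, Y l 0 n = if l = 0 then X n else 0)
    (hYrec : ∀ l k n, Y l (k + 1) n = ((k + 1 : ℚ))⁻¹ •
      ((if n = 0 then 0 else δ (π (Y l k (n - 1)))) +
        ∑ l' ∈ range l, ∑ n' ∈ range (n + 1), δ (Y l' k n') * π (S (l - l') (n - n'))))
    (hSrec : ∀ l n, S (l + 1) n = ((l + 1 : ℚ))⁻¹ • ∑ k ∈ range (l + n + 1), Y l k n)
    (l k n : ℕ) : Y l k n ∈ I ^ (k + l + 1) := by
  induction l using Nat.strong_induction_on generalizing k n with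
  | _ l hYlt =>
    have hSle : ∀ m n, 1 ≤ m → m ≤ l → S m n ∈ I ^ m := by
      rintro (_ | m) n hm hml
      · omega
      · exact phase_mem_pow_of_terms_mem_pow hSrec fun k => hYlt m (by omega) k n
    induction k generalizing n with
    | zero =>
      rw [hY0]
      split_ifs with hl
      · subst hl
        simpa using hX n
      · exact zero_mem _
    | succ k hYk =>
      exact term_succ_mem_pow hδpow hπpow hYrec hYk hYlt hSle n

end PhaseRecursion

theorem phase_recursion_order_general {A : Type*} [CommRing A] [Algebra ℚ A] (I : Ideal A)
    (δ π : A → A)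
    (hδpow : ∀ m : ℕ, 1 ≤ m → ∀ a ∈ I ^ m, δ a ∈ I ^ (m + 1))
    (hπpow : ∀ m : ℕ, 1 ≤ m → ∀ a ∈ I ^ m, π a ∈ I ^ m)
    (X : ℕ → A) (hX : ∀ n, X n ∈ I)
    (S : ℕ → ℕ → A) (Y : ℕ → ℕ → ℕ → A)
    (hY0 : ∀ l n, Y l 0 n = if l = 0 then X n else 0)
    (hYrec : ∀ l k n, Y l (k + 1) n = ((k + 1 : ℚ))⁻¹ •
      ((if n = 0 then 0 else δ (π (Y l k (n - 1)))) +
        ∑ l' ∈ Finset.range l, ∑ n' ∈ Finset.range (n + 1),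
          δ (Y l' k n') * π (S (l - l') (n - n'))))
    (hSrec : ∀ l n, S (l + 1) n = ((l + 1 : ℚ))⁻¹ • ∑ k ∈ Finset.range (l + n + 1), Y l k n) :
    (∀ l k n : ℕ, Y l k n ∈ I ^ (k + l + 1)) ∧ (∀ l n : ℕ, S (l + 1) n ∈ I ^ (l + 1)) :=
  have hY := terms_mem_pow hδpow hπpow hX hY0 hYrec hSrec
  ⟨hY, fun l n => phase_mem_pow_of_terms_mem_pow hSrec fun k => hY l k n⟩

/-- order estimates for the phase recursion:
`Y^(l)_{k,n} ∈ I^{k+l+1}` for all `l, k, n`, and consequently `S^(l+1)_n ∈ I^{l+1}` for all `l, n`.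
Context: `A` is a commutative ℚ-algebra, `I ⊆ A` an ideal, `δ, π : A → A` two
derivations with `δ(A) ⊆ I`, `δ(I^m) ⊆ I^{m+1}`, `π(I^m) ⊆ I^m` for `m ≥ 1`;
`X_n ∈ I` with `π(X_n) = 0`; and the families `S^(l)_n`, `Y^(l)_{k,n}` are defined
by `S^(0)_n = 0`, `Y^(l)_{0,n} = X_n` if `l = 0` and `0` otherwise,
`Y^(l)_{k+1,n} = (1/(k+1))·(δ(π(Y^(l)_{k,n−1})) + Σ_{l'=0}^{l−1} Σ_{n'=0}^{n} δ(Y^(l')_{k,n'})·π(S^(l−l')_{n−n'}))`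
(with the convention `Y^(l)_{k,−1} = 0`), and
`S^(l+1)_n = (1/(l+1))·Σ_{k=0}^{l+n} Y^(l)_{k,n}`. -/
theorem phase_recursion_order {A : Type*} [CommRing A] [Algebra ℚ A] (I : Ideal A)
    (δ π : A → A)
    (hδadd : ∀ a b : A, δ (a + b) = δ a + δ b)
    (hδmul : ∀ a b : A, δ (a * b) = δ a * b + a * δ b)
    (hπadd : ∀ a b : A, π (a + b) = π a + π b)
    (hπmul : ∀ a b : A, π (a * b) = π a * b + a * π b)
    (hδA : ∀ a : A, δ a ∈ I)
    (hδpow : ∀ m : ℕ, 1 ≤ m → ∀ a ∈ I ^ m, δ a ∈ I ^ (m + 1))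
    (hπpow : ∀ m : ℕ, 1 ≤ m → ∀ a ∈ I ^ m, π a ∈ I ^ m)
    (X : ℕ → A) (hX : ∀ n, X n ∈ I) (hπX : ∀ n, π (X n) = 0)
    (S : ℕ → ℕ → A) (Y : ℕ → ℕ → ℕ → A)
    (hS0 : ∀ n, S 0 n = 0)
    (hY0 : ∀ l n, Y l 0 n = if l = 0 then X n else 0)
    (hYrec : ∀ l k n, Y l (k + 1) n = ((k + 1 : ℚ))⁻¹ •
      ((if n = 0 then 0 else δ (π (Y l k (n - 1)))) +
        ∑ l' ∈ Finset.range l, ∑ n' ∈ Finset.range (n + 1),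
          δ (Y l' k n') * π (S (l - l') (n - n'))))
    (hSrec : ∀ l n, S (l + 1) n = ((l + 1 : ℚ))⁻¹ • ∑ k ∈ Finset.range (l + n + 1), Y l k n) :
    (∀ l k n : ℕ, Y l k n ∈ I ^ (k + l + 1)) ∧ (∀ l n : ℕ, S (l + 1) n ∈ I ^ (l + 1)) :=
  phase_recursion_order_general I δ π hδpow hπpow X hX S Y hY0 hYrec hSrec
end
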